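/- arXiv:2402.02536 — 3 statements merged into one kernel-verified Lean document; each statement's English description precedes it below -/
import Mathlib

section
/- Let (X,d) be a metric space with |X| ≥ n and 2 ≤ m < n. If T : X → X is a mapping contracting total pairwise distance on m points with constant α ∈ [0,1), then T is a mapping contracting total pairwise distance on n points with the same constant α. -/
/-!
Every pair of distinct indices among `n` lies in exactly `C(n-2, m-2)` of the `m`-element
subsets of the indices, so summing the `m`-point inequality over all these subsets yields
`C(n-2, m-2) · S(Tx₁, …, Txₙ) ≤ α · C(n-2, m-2) · S(x₁, …, xₙ)`.
-/

noncomputable def totalS {X : Type*} [MetricSpace X] {n : ℕ} (x : Fin n → X) : ℝ :=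
  ∑ i : Fin n, ∑ j ∈ Finset.Ioi i, dist (x i) (x j)

open Finset

namespace Finset

variable {α β M : Type*} [AddCommMonoid M]

theorem offDiag_map (s : Finset α) (e : α ↪ β) :
    (s.map e).offDiag = s.offDiag.map (e.prodMap e) := by
  ext ⟨a, b⟩
  simp only [mem_offDiag, mem_map, Function.Embedding.coe_prodMap, Prod.exists, Prod.map_apply,
    Prod.mk.injEq]
  grind

theorem sum_powersetCard_sum_offDiag [DecidableEq α] (t : Finset α) {m : ℕ} (hm : 2 ≤ m)
    (f : α × α → M) :
    ∑ s ∈ t.powersetCard m, ∑ p ∈ s.offDiag, f p =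
      (#t - 2).choose (m - 2) • ∑ p ∈ t.offDiag, f p := by
  rw [sum_comm' (t' := t.offDiag) (s' := fun p => {s ∈ t.powersetCard m | {p.1, p.2} ⊆ s})]
  · rw [smul_sum]
    refine sum_congr rfl fun p hp => ?_
    obtain ⟨h1, h2, hne⟩ := mem_offDiag.mp hp
    rw [sum_const, card_filter_powersetCard_subset _ _ _ (by simp [insert_subset_iff, h1, h2])
      (by rwa [card_pair hne]), card_pair hne]
  · grind

end Finset

section totalS

variable {X : Type*} [MetricSpace X]

theorem totalS_eq_sum_offDiag_filter_lt {n : ℕ} (x : Fin n → X) :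
    totalS x = ∑ p ∈ (univ : Finset (Fin n)).offDiag with p.1 < p.2, dist (x p.1) (x p.2) := by
  rw [totalS, sum_finset_product _ univ Ioi]
  intro p
  simp only [mem_filter, mem_offDiag, mem_univ, mem_Ioi, true_and]
  exact ⟨fun h => h.2, fun h => ⟨h.ne, h⟩⟩

theorem two_mul_totalS {n : ℕ} (x : Fin n → X) :
    2 * totalS x = ∑ p ∈ (univ : Finset (Fin n)).offDiag, dist (x p.1) (x p.2) := by
  rw [← sum_filter_add_sum_filter_not _ (fun p : Fin n × Fin n => p.1 < p.2), two_mul,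
    totalS_eq_sum_offDiag_filter_lt]
  congr 1
  refine sum_nbij' Prod.swap Prod.swap ?_ ?_ ?_ ?_ fun p _ => dist_comm _ _
  all_goals grind

theorem two_mul_totalS_comp {m n : ℕ} (x : Fin n → X) (e : Fin m ↪ Fin n) :
    2 * totalS (x ∘ e) = ∑ p ∈ (univ.map e).offDiag, dist (x p.1) (x p.2) := by
  rw [two_mul_totalS, offDiag_map, sum_map]
  rfl

end totalS

theorem stmt_1_general {X : Type*} [MetricSpace X] (m n : ℕ) (hm : 2 ≤ m) (hmn : m < n)
    (T : X → X) (α : ℝ)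
    (hT : ∀ x : Fin m → X, Function.Injective x → totalS (T ∘ x) ≤ α * totalS x) :
    ∀ x : Fin n → X, Function.Injective x → totalS (T ∘ x) ≤ α * totalS x := by
  intro x hx
  have hsub : ∀ s ∈ (univ : Finset (Fin n)).powersetCard m,
      ∑ p ∈ s.offDiag, dist ((T ∘ x) p.1) ((T ∘ x) p.2) ≤
        α * ∑ p ∈ s.offDiag, dist (x p.1) (x p.2) := by
    intro s hs
    have hcard : #s = m := mem_powersetCard_univ.mp hs
    rw [← map_orderEmbOfFin_univ s hcard, ← two_mul_totalS_comp, ← two_mul_totalS_comp,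
      mul_left_comm]
    exact mul_le_mul_of_nonneg_left (hT _ (hx.comp (s.orderEmbOfFin hcard).injective))
      zero_le_two
  have hsum := sum_le_sum hsub
  rw [← mul_sum, sum_powersetCard_sum_offDiag _ hm, sum_powersetCard_sum_offDiag _ hm,
    ← two_mul_totalS, ← two_mul_totalS, nsmul_eq_mul, nsmul_eq_mul, card_univ,
    Fintype.card_fin] at hsum
  have hC : 0 < ((n - 2).choose (m - 2) : ℝ) * 2 := by
    have := Nat.choose_pos (show m - 2 ≤ n - 2 by omega)
    positivity
  refine le_of_mul_le_mul_left ?_ hC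
  linarith

theorem stmt_1 {X : Type*} [MetricSpace X] (m n : ℕ) (hm : 2 ≤ m) (hmn : m < n)
    (hcard : ∃ f : Fin n → X, Function.Injective f)
    (T : X → X) (α : ℝ) (hα0 : 0 ≤ α) (hα1 : α < 1)
    (hT : ∀ x : Fin m → X, Function.Injective x → totalS (T ∘ x) ≤ α * totalS x) :
    ∀ x : Fin n → X, Function.Injective x → totalS (T ∘ x) ≤ α * totalS x :=
  stmt_1_general m n hm hmn T α hT
end

section
/- Let n ≥ 2, let (X,d) be a complete metric space with |X| ≥ n, and let T : X → X be a mapping contracting total pairwise distance on n points. Then there exists a point x ∈ X and an integer k with 1 ≤ k ≤ n−1 such that T^k(x) = x (i.e., T has a periodic point whose prime period is at most n−1). -/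
/-!
If some orbit of `T` is eventually periodic, let `z` be a periodic point of minimal period `m`.
On the orbit of `z` the map `T` is a bijection, so it sends an injective `n`-tuple of orbit points
minimising `S` to another such tuple; if `m ≥ n` such tuples exist, and `S(Tx) ≤ α S(x) < S(x)`
contradicts minimality. Otherwise every orbit is injective; consecutive windows of `n` orbit points
have geometrically decaying `S`, so the orbit is Cauchy with a limit `z`. Replacing the first
point of a late window by `z` gives an injective tuple with `S → 0`, hence `T` of the late orbit
points converges to `T z`, and `T z = z`.
-/

open Function Filter Topology

section

variable {X : Type*} [MetricSpace X] {n : ℕ}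

lemma dist_le_totalS (x : Fin n → X) {i j : Fin n} (hij : i ≠ j) :
    dist (x i) (x j) ≤ totalS x := by
  have key : ∀ {i j : Fin n}, i < j → dist (x i) (x j) ≤ totalS x := fun {i j} h =>
    calc dist (x i) (x j) ≤ ∑ k ∈ Finset.Ioi i, dist (x i) (x k) :=
          Finset.single_le_sum (fun _ _ => dist_nonneg) (Finset.mem_Ioi.2 h)
      _ ≤ totalS x :=
          Finset.single_le_sum (f := fun i => ∑ k ∈ Finset.Ioi i, dist (x i) (x k))
            (fun _ _ => Finset.sum_nonneg fun _ _ => dist_nonneg) (Finset.mem_univ i)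
  rcases hij.lt_or_gt with h | h
  · exact key h
  · exact dist_comm (x i) (x j) ▸ key h

lemma totalS_pos (hn : 2 ≤ n) {x : Fin n → X} (hx : Injective x) : 0 < totalS x := by
  have := Fin.nontrivial_iff_two_le.2 hn
  obtain ⟨i, j, hij⟩ := exists_pair_ne (Fin n)
  exact (dist_pos.2 (hx.ne hij)).trans_le (dist_le_totalS x hij)

lemma totalS_const (z : X) : totalS (fun _ : Fin n => z) = 0 := by
  simp [totalS]

lemma continuous_totalS : Continuous (totalS : (Fin n → X) → ℝ) := by
  unfold totalS
  fun_prop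

lemma exists_mem_periodicPts_of_not_injective_orbit {α : Type*} {f : α → α} {x : α}
    (h : ¬Injective fun k => f^[k] x) : ∃ k, f^[k] x ∈ periodicPts f := by
  obtain ⟨a, b, hab, hne⟩ := not_injective_iff.1 h
  wlog hlt : a < b generalizing a b
  · exact this b a hab.symm hne.symm (hne.lt_or_gt.resolve_left hlt)
  refine ⟨a, mk_mem_periodicPts (Nat.sub_pos_of_lt hlt) ?_⟩
  show f^[b - a] (f^[a] x) = f^[a] x
  rw [← iterate_add_apply, Nat.sub_add_cancel hlt.le]
  exact hab.symm

def ContractsTotalDist (n : ℕ) (α : ℝ) (T : X → X) : Prop :=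
  ∀ x : Fin n → X, Injective x → totalS (T ∘ x) ≤ α * totalS x

namespace ContractsTotalDist

variable {α : ℝ} {T : X → X}

theorem not_injOn_of_mapsTo (hT : ContractsTotalDist n α T) (hα : α < 1) (hn : 2 ≤ n)
    {O : Set X} [Finite O] (hTO : Set.MapsTo T O O) (x : Fin n → O) (hx : Injective x) :
    ¬Set.InjOn T O := by
  intro hinj
  have : Nonempty {y : Fin n → O // Injective y} := ⟨⟨x, hx⟩⟩
  obtain ⟨⟨y, hy⟩, hmin⟩ :=
    Finite.exists_min fun y : {y : Fin n → O // Injective y} => totalS (Subtype.val ∘ y.1)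
  have hle := hmin ⟨hTO.restrict ∘ y, (hTO.restrict_inj.2 hinj).comp hy⟩
  have hcontr := hT (Subtype.val ∘ y) (Subtype.val_injective.comp hy)
  have hpos := totalS_pos hn (Subtype.val_injective.comp hy)
  change totalS (Subtype.val ∘ y) ≤ totalS (T ∘ Subtype.val ∘ y) at hle
  nlinarith

theorem minimalPeriod_lt (hT : ContractsTotalDist n α T) (hα : α < 1) (hn : 2 ≤ n) {z : X}
    (hz : z ∈ periodicPts T) : minimalPeriod T z < n := by
  by_contra! hle
  have hpos := minimalPeriod_pos_of_mem_periodicPts hz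
  set O := Set.range fun k => T^[k] z
  have hfin : O.Finite := (Set.finite_range fun k : Fin (minimalPeriod T z) => T^[k] z).subset
    (by rintro _ ⟨k, rfl⟩; exact ⟨⟨k % _, Nat.mod_lt _ hpos⟩, iterate_mod_minimalPeriod_eq⟩)
  have := hfin.to_subtype
  refine hT.not_injOn_of_mapsTo hα hn (O := O) ?_ (fun i => ⟨T^[i] z, i, rfl⟩) ?_ ?_
  · rintro _ ⟨k, rfl⟩
    exact ⟨k + 1, iterate_succ_apply' T k z⟩
  · intro i j h
    exact Fin.ext <| iterate_injOn_Iio_minimalPeriod (i.2.trans_le hle) (j.2.trans_le hle)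
      (congrArg Subtype.val h)
  · refine (bijOn_ptsOfPeriod T hpos).injOn.mono ?_
    rintro _ ⟨k, rfl⟩
    exact (isPeriodicPt_minimalPeriod T z).apply_iterate k

theorem totalS_orbit_le (hT : ContractsTotalDist n α T) (hα : 0 ≤ α) {x₀ : X}
    (ho : Injective fun k => T^[k] x₀) (k : ℕ) :
    totalS (fun i : Fin n => T^[k + i] x₀) ≤ α ^ k * totalS (fun i : Fin n => T^[i] x₀) := by
  induction k with
  | zero => simp
  | succ k ih =>
    have hinj : Injective fun i : Fin n => T^[k + i] x₀ :=
      ho.comp fun i j h => Fin.ext (Nat.add_left_cancel h)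
    have hshift : T ∘ (fun i : Fin n => T^[k + i] x₀) = fun i : Fin n => T^[k + 1 + i] x₀ := by
      funext i
      simp only [comp_apply, ← iterate_succ_apply' T, Nat.succ_eq_add_one, add_right_comm]
    calc totalS (fun i : Fin n => T^[k + 1 + i] x₀)
        = totalS (T ∘ fun i : Fin n => T^[k + i] x₀) := by rw [hshift]
      _ ≤ α * totalS (fun i : Fin n => T^[k + i] x₀) := hT _ hinj
      _ ≤ α * (α ^ k * totalS (fun i : Fin n => T^[i] x₀)) := by gcongr
      _ = α ^ (k + 1) * totalS (fun i : Fin n => T^[i] x₀) := by ring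

theorem cauchySeq_orbit (hT : ContractsTotalDist n α T) (hα0 : 0 ≤ α) (hα1 : α < 1)
    (hn : 2 ≤ n) {x₀ : X} (ho : Injective fun k => T^[k] x₀) :
    CauchySeq fun k => T^[k] x₀ := by
  refine cauchySeq_of_le_geometric α (totalS fun i : Fin n => T^[i] x₀) hα1 fun k => ?_
  have h01 : (⟨0, by omega⟩ : Fin n) ≠ ⟨1, by omega⟩ := by simp
  calc dist (T^[k] x₀) (T^[k + 1] x₀) ≤ totalS (fun i : Fin n => T^[k + i] x₀) :=
        dist_le_totalS (fun i : Fin n => T^[k + i] x₀) h01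
    _ ≤ α ^ k * totalS (fun i : Fin n => T^[i] x₀) := hT.totalS_orbit_le hα0 ho k
    _ = _ := mul_comm _ _

theorem isFixedPt_of_tendsto (hT : ContractsTotalDist n α T) (hn : 2 ≤ n) {x₀ z : X}
    (ho : Injective fun k => T^[k] x₀) (hz : Tendsto (fun k => T^[k] x₀) atTop (𝓝 z)) :
    IsFixedPt T z := by
  set o := fun k => T^[k] x₀
  let i₀ : Fin n := ⟨0, by omega⟩
  let i₁ : Fin n := ⟨1, by omega⟩
  have hi : i₀ ≠ i₁ := by simp [i₀, i₁]
  set v : ℕ → Fin n → X := fun k => update (fun i => o (k + i)) i₀ z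
  have hv : Tendsto v atTop (𝓝 fun _ => z) := tendsto_pi_nhds.2 fun i => by
    by_cases h : i = i₀
    · simp [v, h]
    · simp only [v, update_of_ne h]
      exact hz.comp (tendsto_add_atTop_nat i)
  have hS : Tendsto (fun k => totalS (v k)) atTop (𝓝 0) := by
    rw [← totalS_const (n := n) z]
    exact (continuous_totalS.tendsto _).comp hv
  obtain ⟨M, hM⟩ : ∃ M, ∀ k ≥ M, o k ≠ z := eventually_atTop.1 <| by
    simpa only [Nat.cofinite_eq_atTop] using
      ho.tendsto_cofinite.eventually (eventually_cofinite_ne z)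
  have hvinj : ∀ k ≥ M, Injective (v k) := fun k hk i j h => by
    by_cases hi₀ : i = i₀ <;> by_cases hj₀ : j = i₀ <;>
      simp only [v, update_apply, hi₀, hj₀, if_true, if_false] at h
    · exact hi₀.trans hj₀.symm
    · exact absurd h.symm (hM _ (by omega))
    · exact absurd h (hM _ (by omega))
    · exact Fin.ext (Nat.add_left_cancel (ho h))
  have hdist : ∀ k ≥ M, dist (o (k + 2)) (T z) ≤ α * totalS (v k) := fun k hk =>
    calc dist (o (k + 2)) (T z) = dist ((T ∘ v k) i₀) ((T ∘ v k) i₁) := by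
          simp [v, i₀, i₁, hi.symm, o, dist_comm, ← iterate_succ_apply' T]
      _ ≤ totalS (T ∘ v k) := dist_le_totalS _ hi
      _ ≤ α * totalS (v k) := hT _ (hvinj k hk)
  have hTz : Tendsto (fun k => o (k + 2)) atTop (𝓝 (T z)) :=
    tendsto_iff_dist_tendsto_zero.2 <| squeeze_zero' (Eventually.of_forall fun _ => dist_nonneg)
      (eventually_atTop.2 ⟨M, hdist⟩) (by simpa using hS.const_mul α)
  exact tendsto_nhds_unique hTz (hz.comp (tendsto_add_atTop_nat 2))

end ContractsTotalDist

end

theorem stmt_3 {X : Type*} [MetricSpace X] [CompleteSpace X] (n : ℕ) (hn : 2 ≤ n)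
    (hcard : ∃ f : Fin n → X, Function.Injective f)
    (T : X → X)
    (hT : ∃ α : ℝ, 0 ≤ α ∧ α < 1 ∧
      ∀ x : Fin n → X, Function.Injective x → totalS (T ∘ x) ≤ α * totalS x) :
    ∃ (x : X) (k : ℕ), 1 ≤ k ∧ k ≤ n - 1 ∧ T^[k] x = x := by
  obtain ⟨α, hα0, hα1, hT⟩ := hT
  replace hT : ContractsTotalDist n α T := hT
  obtain ⟨f, -⟩ := hcard
  set x₀ := f ⟨0, by omega⟩
  by_cases ho : Injective fun k => T^[k] x₀
  · obtain ⟨z, hz⟩ := cauchySeq_tendsto_of_complete (hT.cauchySeq_orbit hα0 hα1 hn ho)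
    exact ⟨z, 1, le_rfl, by omega, hT.isFixedPt_of_tendsto hn ho hz⟩
  · obtain ⟨k, hk⟩ := exists_mem_periodicPts_of_not_injective_orbit ho
    have := hT.minimalPeriod_lt hα1 hn hk
    exact ⟨_, _, minimalPeriod_pos_of_mem_periodicPts hk, by omega, iterate_minimalPeriod⟩
end

section
/- Let n ≥ 2, let (X,d) be a metric space with |X| ≥ n, and let T : X → X be a mapping contracting total pairwise distance on n points with constant α ∈ [0,1). If x ∈ X is an accumulation point of X (every open ball centered at x contains infinitely many points of X), then d(Tx,Ty) ≤ α·d(x,y) holds for all y ∈ X. -/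
open Finset Filter Topology

section

variable {X : Type*} [MetricSpace X]

lemma totalS_nonneg {n : ℕ} (w : Fin n → X) : 0 ≤ totalS w :=
  sum_nonneg fun _ _ => sum_nonneg fun _ _ => dist_nonneg

lemma totalS_cons {n : ℕ} (a : X) (w : Fin n → X) :
    totalS (Fin.cons a w : Fin (n + 1) → X) = ∑ j, dist a (w j) + totalS w := by
  simp [totalS, Fin.sum_univ_succ]

lemma totalS_le_card_mul_sum_dist {n : ℕ} (w : Fin n → X) (c : X) :
    totalS w ≤ n * ∑ i, dist (w i) c := by
  induction n with
  | zero => simp [totalS]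
  | succ n ih =>
    rw [← Fin.cons_self_tail w, totalS_cons, Fin.sum_univ_succ]
    simp only [Fin.cons_zero, Fin.cons_succ]
    have hpair : ∑ j, dist (w 0) (Fin.tail w j) ≤ ∑ j, (dist (w 0) c + dist (Fin.tail w j) c) :=
      sum_le_sum fun j _ => dist_triangle_right _ _ _
    rw [sum_add_distrib, sum_const, card_univ, Fintype.card_fin, nsmul_eq_mul] at hpair
    have htail := ih (Fin.tail w)
    push_cast
    nlinarith [dist_nonneg (x := w 0) (y := c)]

lemma mul_dist_le_totalS_cons_cons {m : ℕ} (a b : X) (h : Fin m → X) :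
    (m + 1) * dist a b ≤
      totalS (Fin.cons a (Fin.cons b h : Fin (m + 1) → X) : Fin (m + 2) → X) := by
  rw [totalS_cons, Fin.sum_univ_succ, totalS_cons]
  simp only [Fin.cons_zero, Fin.cons_succ]
  have hpair : ∑ k, dist a b ≤ ∑ k, (dist a (h k) + dist b (h k)) :=
    sum_le_sum fun k _ => dist_triangle_right _ _ _
  rw [sum_const, card_univ, Fintype.card_fin, nsmul_eq_mul, sum_add_distrib] at hpair
  linarith [totalS_nonneg h]

lemma totalS_cons_cons_le {m : ℕ} (a b : X) (h : Fin m → X) :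
    totalS (Fin.cons a (Fin.cons b h : Fin (m + 1) → X) : Fin (m + 2) → X) ≤
      (m + 1) * dist a b + (m + 2) * ∑ k, dist (h k) b := by
  rw [totalS_cons, Fin.sum_univ_succ, totalS_cons]
  simp only [Fin.cons_zero, Fin.cons_succ]
  have hpair : ∑ k, dist a (h k) ≤ ∑ k, (dist a b + dist (h k) b) :=
    sum_le_sum fun k _ => dist_triangle_right _ _ _
  rw [sum_add_distrib, sum_const, card_univ, Fintype.card_fin, nsmul_eq_mul] at hpair
  have hb : ∑ k, dist b (h k) = ∑ k, dist (h k) b := sum_congr rfl fun k _ => dist_comm _ _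
  linarith [totalS_le_card_mul_sum_dist h b]

lemma exists_injective_sum_dist_le {x : X} (hacc : ∀ r : ℝ, 0 < r → (Metric.ball x r).Infinite)
    (s : Set X) (hs : s.Finite) (m : ℕ) {δ : ℝ} (hδ : 0 < δ) :
    ∃ h : Fin m → X, Function.Injective h ∧ (∀ k, h k ∉ s) ∧ ∑ k, dist (h k) x ≤ δ := by
  have hr : 0 < δ / (m + 1) := by positivity
  let e := ((hacc _ hr).sdiff hs).natEmbedding
  refine ⟨fun k => e k, (Subtype.val_injective.comp e.injective).comp Fin.val_injective,
    fun k => (e k).2.2, ?_⟩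
  calc ∑ k : Fin m, dist (e k : X) x ≤ ∑ _k : Fin m, δ / (m + 1) :=
        sum_le_sum fun k _ => (Metric.mem_ball.1 (e k).2.1).le
    _ ≤ δ := by
      rw [sum_const, card_univ, Fintype.card_fin, nsmul_eq_mul, mul_div_assoc']
      exact div_le_of_le_mul₀ (by positivity) hδ.le (by linarith)

end

theorem stmt_8_general {X : Type*} [MetricSpace X] (n : ℕ) (hn : 2 ≤ n)
    (T : X → X) (α : ℝ) (hα0 : 0 ≤ α)
    (hT : ∀ x : Fin n → X, Function.Injective x → totalS (T ∘ x) ≤ α * totalS x)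
    (x : X) (hacc : ∀ r : ℝ, 0 < r → (Metric.ball x r).Infinite) :
    ∀ y : X, dist (T x) (T y) ≤ α * dist x y := by
  obtain ⟨m, rfl⟩ : ∃ m, n = m + 2 := ⟨n - 2, by omega⟩
  intro y
  rcases eq_or_ne y x with rfl | hyx
  · simp
  have key : ∀ δ > 0, (m + 1) * dist (T y) (T x) ≤ α * ((m + 1) * dist y x + (m + 2) * δ) := by
    intro δ hδ
    obtain ⟨h, h_inj, h_avoid, h_sum⟩ :=
      exists_injective_sum_dist_le hacc {x, y} (Set.toFinite _) m hδ
    have hu : Function.Injective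
        (Fin.cons y (Fin.cons x h : Fin (m + 1) → X) : Fin (m + 2) → X) := by
      simp_all [Fin.cons_injective_iff, Fin.range_cons]
    calc (m + 1) * dist (T y) (T x) ≤ _ := mul_dist_le_totalS_cons_cons _ _ (T ∘ h)
      _ ≤ α * _ := by simpa only [Fin.comp_cons] using hT _ hu
      _ ≤ _ := mul_le_mul_of_nonneg_left ((totalS_cons_cons_le y x h).trans (by gcongr)) hα0
  have hlim : Tendsto (fun δ => α * ((m + 1) * dist y x + (m + 2) * δ)) (𝓝[>] 0)
      (𝓝 (α * ((m + 1) * dist y x))) :=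
    tendsto_nhdsWithin_of_tendsto_nhds (Continuous.tendsto' (by fun_prop) _ _ (by simp))
  have hlimit := ge_of_tendsto hlim (eventually_nhdsWithin_of_forall key)
  rw [mul_left_comm, dist_comm (T y), dist_comm y] at hlimit
  exact le_of_mul_le_mul_left hlimit (by positivity)

theorem stmt_8 {X : Type*} [MetricSpace X] (n : ℕ) (hn : 2 ≤ n)
    (hcard : ∃ f : Fin n → X, Function.Injective f)
    (T : X → X) (α : ℝ) (hα0 : 0 ≤ α) (hα1 : α < 1)
    (hT : ∀ x : Fin n → X, Function.Injective x → totalS (T ∘ x) ≤ α * totalS x)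
    (x : X) (hacc : ∀ r : ℝ, 0 < r → (Metric.ball x r).Infinite) :
    ∀ y : X, dist (T x) (T y) ≤ α * dist x y :=
  stmt_8_general n hn T α hα0 hT x hacc
end
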